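/- arXiv:1301.1793 — 3 statements merged into one kernel-verified Lean document; each statement's English description precedes it below -/
import Mathlib

section
/- Let H be a complex Hilbert space and let (T_k)_{k∈ℕ} be a sequence of continuous linear operators on H converging in operator norm to a continuous linear operator T. Then ∑_{n=0}^∞ σ_n(T) ≤ liminf_{k→∞} ∑_{n=0}^∞ σ_n(T_k), where both sides are taken in [0,∞]. In particular, if liminf_{k→∞} ∑_{n=0}^∞ σ_n(T_k) < ∞, then T has finite trace norm. -/
open scoped ENNReal
/-- The `n`-th approximation number of a continuous linear operator `T` on a Hilbert space:
the infimum of `‖T - R‖` over continuous linear operators `R` whose range has dimension `≤ n`. -/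
noncomputable def approxNumber {H : Type*} [NormedAddCommGroup H] [InnerProductSpace ℂ H]
    (n : ℕ) (T : H →L[ℂ] H) : ℝ :=
  sInf {x : ℝ | ∃ R : H →L[ℂ] H,
    (FiniteDimensional ℂ (LinearMap.range (R : H →ₗ[ℂ] H)) ∧
      Module.finrank ℂ (LinearMap.range (R : H →ₗ[ℂ] H)) ≤ n) ∧ x = ‖T - R‖}

/-- The trace norm `‖T‖₁ = ∑_{n} σ_n(T)` of a continuous linear operator, a value in `[0,∞]`. -/
noncomputable def traceNorm {H : Type*} [NormedAddCommGroup H] [InnerProductSpace ℂ H]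
    (T : H →L[ℂ] H) : ℝ≥0∞ :=
  ∑' n, ENNReal.ofReal (approxNumber n T)

/-!
Each approximation number is `1`-Lipschitz in the operator norm, since
`‖A - R‖ ≤ ‖B - R‖ + ‖A - B‖` for every competitor `R`. Hence `T ↦ σ_n(T)` is continuous, and
the trace norm, a series of nonnegative continuous functions, is lower semicontinuous, which is
exactly the `liminf` inequality along the convergent sequence.
-/

open Filter Topology

section ApproxNumber

variable {H : Type*} [NormedAddCommGroup H] [InnerProductSpace ℂ H]

theorem approxNumber_le_norm_sub {n : ℕ} {R : H →L[ℂ] H}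
    (hR : FiniteDimensional ℂ (LinearMap.range (R : H →ₗ[ℂ] H)) ∧
      Module.finrank ℂ (LinearMap.range (R : H →ₗ[ℂ] H)) ≤ n) (T : H →L[ℂ] H) :
    approxNumber n T ≤ ‖T - R‖ :=
  csInf_le ⟨0, fun _ ⟨_, _, hx⟩ => hx ▸ norm_nonneg _⟩ ⟨R, hR, rfl⟩

theorem approxNumber_le_add_norm_sub (n : ℕ) (A B : H →L[ℂ] H) :
    approxNumber n A ≤ approxNumber n B + ‖A - B‖ := by
  have hzero : LinearMap.range ((0 : H →L[ℂ] H) : H →ₗ[ℂ] H) = ⊥ := LinearMap.range_zero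
  rw [← sub_le_iff_le_add]
  conv_rhs => rw [approxNumber]
  refine le_csInf ⟨_, 0, ⟨hzero ▸ inferInstance, by rw [hzero, finrank_bot]; exact n.zero_le⟩, rfl⟩
    fun _ ⟨R, hR, hx⟩ => ?_
  rw [sub_le_iff_le_add, hx]
  calc approxNumber n A ≤ ‖A - R‖ := approxNumber_le_norm_sub hR A
    _ = ‖(B - R) + (A - B)‖ := by rw [sub_add_sub_cancel']
    _ ≤ ‖B - R‖ + ‖A - B‖ := norm_add_le _ _

theorem lipschitzWith_approxNumber (n : ℕ) :
    LipschitzWith 1 (approxNumber n : (H →L[ℂ] H) → ℝ) :=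
  LipschitzWith.of_le_add fun A B => by
    simpa only [dist_eq_norm] using approxNumber_le_add_norm_sub n A B

theorem lowerSemicontinuous_traceNorm :
    LowerSemicontinuous (traceNorm : (H →L[ℂ] H) → ℝ≥0∞) :=
  lowerSemicontinuous_tsum fun n =>
    (ENNReal.continuous_ofReal.comp (lipschitzWith_approxNumber n).continuous).lowerSemicontinuous

end ApproxNumber

theorem traceNorm_le_liminf_general {H : Type*} [NormedAddCommGroup H]
    [InnerProductSpace ℂ H]
    (T : ℕ → H →L[ℂ] H) (Tlim : H →L[ℂ] H)
    (hconv : Filter.Tendsto (fun k => ‖T k - Tlim‖) Filter.atTop (nhds 0)) :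
    traceNorm Tlim ≤ Filter.atTop.liminf (fun k => traceNorm (T k)) ∧
      (Filter.atTop.liminf (fun k => traceNorm (T k)) < ⊤ → traceNorm Tlim < ⊤) := by
  have hT : Tendsto T atTop (𝓝 Tlim) := tendsto_iff_norm_sub_tendsto_zero.mpr hconv
  have key : traceNorm Tlim ≤ atTop.liminf (fun k => traceNorm (T k)) :=
    (lowerSemicontinuous_traceNorm.le_liminf Tlim).trans hT.liminf_le_liminf_comp
  exact ⟨key, key.trans_lt⟩

/-- If `(T k)` converges in operator norm to `T` on a complex Hilbert space, then
`∑_n σ_n(T) ≤ liminf_k ∑_n σ_n(T k)` in `[0,∞]`; in particular if the right-hand side is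
finite, `T` has finite trace norm. -/
theorem traceNorm_le_liminf {H : Type*} [NormedAddCommGroup H]
    [InnerProductSpace ℂ H] [CompleteSpace H]
    (T : ℕ → H →L[ℂ] H) (Tlim : H →L[ℂ] H)
    (hconv : Filter.Tendsto (fun k => ‖T k - Tlim‖) Filter.atTop (nhds 0)) :
    traceNorm Tlim ≤ Filter.atTop.liminf (fun k => traceNorm (T k)) ∧
      (Filter.atTop.liminf (fun k => traceNorm (T k)) < ⊤ → traceNorm Tlim < ⊤) :=
  traceNorm_le_liminf_general T Tlim hconv
end

section
/- Let H be a complex vector space equipped with two norms ‖·‖ and ‖·‖', each induced by an inner product, and suppose there is a real number 0 < ε < 1 with (1−ε)‖x‖' ≤ ‖x‖ ≤ (1+ε)‖x‖' for all x ∈ H. Then for every linear operator T : H → H that is continuous for these norms and every n ∈ ℕ, one has ((1−ε)/(1+ε)) σ'_n(T) ≤ σ_n(T) ≤ ((1+ε)/(1−ε)) σ'_n(T), where σ_n (resp. σ'_n) denotes the n-th approximation number computed with the operator norm induced by ‖·‖ (resp. ‖·‖'). Consequently ((1−ε)/(1+ε)) ‖T‖₁' ≤ ‖T‖₁ ≤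 ((1+ε)/(1−ε)) ‖T‖₁' for the corresponding trace norms. -/
/-!
If `N ≤ C • p` and `p ≤ D • N` for a seminorm `p`, every `p`-bounded operator `S` is `N`-bounded
with `‖S‖_N ≤ C D ‖S‖_p`. Applied to `S = T - R` for the finite-rank competitors `R` in the
definition of `σ_n`, this gives `σ_n^N(T) ≤ C D σ_n^p(T)`. The constants `1 + ε` and `(1 - ε)⁻¹`
serve for both orders of the two norms, which gives the two-sided bound on each `σ_n`; summing
gives the trace-norm bound.
-/

open scoped ENNReal

/-- The norm induced by an inner product (given as an `InnerProductSpace.Core`). -/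
noncomputable def coreNorm {H : Type*} [AddCommGroup H] [Module ℂ H]
    (c : InnerProductSpace.Core ℂ H) (x : H) : ℝ :=
  Real.sqrt (c.inner x x).re

/-- A linear operator is bounded (continuous) with respect to a norm `N`. -/
def IsBoundedWrt {H : Type*} [AddCommGroup H] [Module ℂ H]
    (N : H → ℝ) (T : H →ₗ[ℂ] H) : Prop :=
  ∃ M : ℝ, ∀ x, N (T x) ≤ M * N x

/-- The operator norm of a linear operator with respect to a norm `N`. -/
noncomputable def opNormWrt {H : Type*} [AddCommGroup H] [Module ℂ H]
    (N : H → ℝ) (T : H →ₗ[ℂ] H) : ℝ :=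
  sInf {M : ℝ | 0 ≤ M ∧ ∀ x, N (T x) ≤ M * N x}

/-- The `n`-th approximation number of a linear operator with respect to a norm `N`:
the infimum of the `N`-operator norms `‖T - R‖_N` over bounded linear operators `R`
whose range has dimension `≤ n`. -/
noncomputable def approxNumWrt {H : Type*} [AddCommGroup H] [Module ℂ H]
    (N : H → ℝ) (n : ℕ) (T : H →ₗ[ℂ] H) : ℝ :=
  sInf {x : ℝ | ∃ R : H →ₗ[ℂ] H, IsBoundedWrt N R ∧
    (FiniteDimensional ℂ (LinearMap.range R) ∧ Module.finrank ℂ (LinearMap.range R) ≤ n) ∧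
    x = opNormWrt N (T - R)}

/-- The trace norm `‖T‖₁ = ∑_n σ_n(T)` with respect to a norm `N`, a value in `[0,∞]`. -/
noncomputable def traceNormWrt {H : Type*} [AddCommGroup H] [Module ℂ H]
    (N : H → ℝ) (T : H →ₗ[ℂ] H) : ℝ≥0∞ :=
  ∑' n, ENNReal.ofReal (approxNumWrt N n T)

section

variable {H : Type*} [AddCommGroup H] [Module ℂ H]

noncomputable def coreAddGroupSeminorm (c : InnerProductSpace.Core ℂ H) : AddGroupSeminorm H :=
  letI := @InnerProductSpace.Core.toNormedAddCommGroup ℂ H _ _ _ c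
  normAddGroupSeminorm H

lemma opNormWrt_nonneg (N : H → ℝ) (T : H →ₗ[ℂ] H) : 0 ≤ opNormWrt N T :=
  Real.sInf_nonneg fun _ hM => hM.1

lemma opNormWrt_le {N : H → ℝ} {T : H →ₗ[ℂ] H} {M : ℝ} (hM : 0 ≤ M)
    (h : ∀ x, N (T x) ≤ M * N x) : opNormWrt N T ≤ M :=
  csInf_le ⟨0, fun _ hM => hM.1⟩ ⟨hM, h⟩

lemma IsBoundedWrt.le_opNormWrt_mul {N : H → ℝ} (hN : 0 ≤ N) {T : H →ₗ[ℂ] H}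
    (hT : IsBoundedWrt N T) (x : H) : N (T x) ≤ opNormWrt N T * N x := by
  obtain ⟨M, hM⟩ := hT
  have hne : {M : ℝ | 0 ≤ M ∧ ∀ x, N (T x) ≤ M * N x}.Nonempty :=
    ⟨max M 0, le_max_right M 0, fun y => (hM y).trans (by gcongr; exacts [hN y, le_max_left M 0])⟩
  rw [opNormWrt, mul_comm, ← smul_eq_mul, ← Real.sInf_smul_of_nonneg (hN x)]
  refine le_csInf hne.smul_set ?_
  rintro _ ⟨M, hM, rfl⟩
  simpa only [smul_eq_mul, mul_comm] using hM.2 x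

lemma isBoundedWrt_zero (p : AddGroupSeminorm H) : IsBoundedWrt p 0 :=
  ⟨0, fun x => by simp⟩

lemma IsBoundedWrt.sub (p : AddGroupSeminorm H) {T R : H →ₗ[ℂ] H} (hT : IsBoundedWrt p T)
    (hR : IsBoundedWrt p R) : IsBoundedWrt p (T - R) := by
  refine ⟨opNormWrt p T + opNormWrt p R, fun x => ?_⟩
  calc p (T x - R x) ≤ p (T x) + p (R x) := map_sub_le_add p _ _
    _ ≤ opNormWrt p T * p x + opNormWrt p R * p x :=
      add_le_add (hT.le_opNormWrt_mul (apply_nonneg p) x) (hR.le_opNormWrt_mul (apply_nonneg p) x)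
    _ = (opNormWrt p T + opNormWrt p R) * p x := (add_mul _ _ _).symm

lemma IsBoundedWrt.apply_le_mul_of_comparable {N : H → ℝ} (p : AddGroupSeminorm H) {C D : ℝ}
    (hC : 0 ≤ C) (hNp : ∀ x, N x ≤ C * p x) (hpN : ∀ x, p x ≤ D * N x) {T : H →ₗ[ℂ] H}
    (hT : IsBoundedWrt p T) (x : H) : N (T x) ≤ C * D * opNormWrt p T * N x :=
  calc N (T x) ≤ C * p (T x) := hNp _
    _ ≤ C * (opNormWrt p T * p x) := by gcongr; exact hT.le_opNormWrt_mul (apply_nonneg p) x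
    _ ≤ C * (opNormWrt p T * (D * N x)) := by
      gcongr
      · exact opNormWrt_nonneg p T
      · exact hpN x
    _ = C * D * opNormWrt p T * N x := by ring

lemma IsBoundedWrt.of_comparable {N : H → ℝ} (p : AddGroupSeminorm H) {C D : ℝ} (hC : 0 ≤ C)
    (hNp : ∀ x, N x ≤ C * p x) (hpN : ∀ x, p x ≤ D * N x) {T : H →ₗ[ℂ] H}
    (hT : IsBoundedWrt p T) : IsBoundedWrt N T :=
  ⟨_, hT.apply_le_mul_of_comparable p hC hNp hpN⟩

lemma opNormWrt_le_mul_of_comparable {N : H → ℝ} (p : AddGroupSeminorm H) {C D : ℝ}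
    (hC : 0 ≤ C) (hD : 0 ≤ D) (hNp : ∀ x, N x ≤ C * p x) (hpN : ∀ x, p x ≤ D * N x)
    {T : H →ₗ[ℂ] H} (hT : IsBoundedWrt p T) : opNormWrt N T ≤ C * D * opNormWrt p T :=
  opNormWrt_le (by have := opNormWrt_nonneg p T; positivity)
    (hT.apply_le_mul_of_comparable p hC hNp hpN)

lemma approxNumWrt_le_opNormWrt_sub {N : H → ℝ} {n : ℕ} {T R : H →ₗ[ℂ] H}
    (hR : IsBoundedWrt N R) (hRn : FiniteDimensional ℂ (LinearMap.range R) ∧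
      Module.finrank ℂ (LinearMap.range R) ≤ n) :
    approxNumWrt N n T ≤ opNormWrt N (T - R) :=
  csInf_le ⟨0, by rintro _ ⟨R, -, -, rfl⟩; exact opNormWrt_nonneg N _⟩ ⟨R, hR, hRn, rfl⟩

lemma approxNumWrt_le_mul_of_comparable {N : H → ℝ} (p : AddGroupSeminorm H) {C D : ℝ}
    (hC : 0 ≤ C) (hD : 0 ≤ D) (hNp : ∀ x, N x ≤ C * p x) (hpN : ∀ x, p x ≤ D * N x) (n : ℕ)
    {T : H →ₗ[ℂ] H} (hT : IsBoundedWrt p T) :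
    approxNumWrt N n T ≤ C * D * approxNumWrt p n T := by
  rw [approxNumWrt.eq_1 p, ← smul_eq_mul, ← Real.sInf_smul_of_nonneg (by positivity)]
  refine le_csInf (Set.Nonempty.smul_set ⟨_, 0, isBoundedWrt_zero p,
    by rw [LinearMap.range_zero]; exact ⟨inferInstance, by simp⟩, rfl⟩) ?_
  rintro _ ⟨_, ⟨R, hR, hRn, rfl⟩, rfl⟩
  calc approxNumWrt N n T ≤ opNormWrt N (T - R) :=
        approxNumWrt_le_opNormWrt_sub (hR.of_comparable p hC hNp hpN) hRn
    _ ≤ C * D * opNormWrt p (T - R) :=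
        opNormWrt_le_mul_of_comparable p hC hD hNp hpN (hT.sub p hR)

lemma ofReal_mul_traceNormWrt {N : H → ℝ} {k : ℝ} (hk : 0 ≤ k) (T : H →ₗ[ℂ] H) :
    ENNReal.ofReal k * traceNormWrt N T = ∑' n, ENNReal.ofReal (k * approxNumWrt N n T) := by
  simp only [traceNormWrt, ← ENNReal.tsum_mul_left, ENNReal.ofReal_mul hk]

end

/-- If two inner-product norms `N, N'` on a complex vector space satisfy
`(1-ε)‖x‖' ≤ ‖x‖ ≤ (1+ε)‖x‖'` with `0 < ε < 1`, then for every bounded linear operator `T`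
and every `n`, `((1-ε)/(1+ε)) σ'_n(T) ≤ σ_n(T) ≤ ((1+ε)/(1-ε)) σ'_n(T)`, and consequently
`((1-ε)/(1+ε)) ‖T‖₁' ≤ ‖T‖₁ ≤ ((1+ε)/(1-ε)) ‖T‖₁'`. -/
theorem approxNumWrt_equiv {H : Type*} [AddCommGroup H] [Module ℂ H]
    (c c' : InnerProductSpace.Core ℂ H) (N N' : H → ℝ)
    (hN : ∀ x, N x = coreNorm c x) (hN' : ∀ x, N' x = coreNorm c' x)
    (ε : ℝ) (hε0 : 0 < ε) (hε1 : ε < 1)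
    (hlow : ∀ x, (1 - ε) * N' x ≤ N x) (hup : ∀ x, N x ≤ (1 + ε) * N' x)
    (T : H →ₗ[ℂ] H) (hT : IsBoundedWrt N T) (hT' : IsBoundedWrt N' T) :
    (∀ n : ℕ, (1 - ε) / (1 + ε) * approxNumWrt N' n T ≤ approxNumWrt N n T ∧
      approxNumWrt N n T ≤ (1 + ε) / (1 - ε) * approxNumWrt N' n T) ∧
    (ENNReal.ofReal ((1 - ε) / (1 + ε)) * traceNormWrt N' T ≤ traceNormWrt N T ∧
      traceNormWrt N T ≤ ENNReal.ofReal ((1 + ε) / (1 - ε)) * traceNormWrt N' T) := by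
  obtain ⟨p, rfl⟩ : ∃ p : AddGroupSeminorm H, ⇑p = N :=
    ⟨coreAddGroupSeminorm c, funext fun x => (hN x).symm⟩
  obtain ⟨p', rfl⟩ : ∃ p' : AddGroupSeminorm H, ⇑p' = N' :=
    ⟨coreAddGroupSeminorm c', funext fun x => (hN' x).symm⟩
  have hsub : 0 < 1 - ε := by linarith
  have hadd : 0 < 1 + ε := by linarith
  have hlow' (x : H) : p' x ≤ (1 - ε)⁻¹ * p x := by
    rw [le_inv_mul_iff₀ hsub]
    exact hlow x
  have hσ (n : ℕ) : (1 - ε) / (1 + ε) * approxNumWrt p' n T ≤ approxNumWrt p n T ∧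
      approxNumWrt p n T ≤ (1 + ε) / (1 - ε) * approxNumWrt p' n T := by
    have h₁ := approxNumWrt_le_mul_of_comparable _ hadd.le (inv_nonneg.2 hsub.le) hup hlow' n hT'
    have h₂ := approxNumWrt_le_mul_of_comparable _ (inv_nonneg.2 hsub.le) hadd.le hlow' hup n hT
    rw [mul_assoc, le_inv_mul_iff₀ hsub] at h₂
    rw [div_mul_eq_mul_div, div_le_iff₀ hadd, div_eq_mul_inv]
    exact ⟨h₂.trans_eq (mul_comm _ _), h₁⟩
  refine ⟨hσ, ?_, ?_⟩
  · rw [ofReal_mul_traceNormWrt (by positivity)]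
    exact ENNReal.tsum_le_tsum fun n => ENNReal.ofReal_le_ofReal (hσ n).1
  · rw [ofReal_mul_traceNormWrt (by positivity)]
    exact ENNReal.tsum_le_tsum fun n => ENNReal.ofReal_le_ofReal (hσ n).2
end

section
/- Let H be a complex Hilbert space, (φ_j)_{j∈ℕ} a Hilbert basis of H, and (λ_j)_{j∈ℕ} nonnegative real numbers. Let D := {x ∈ H : ∑_{j=0}^∞ λ_j² |⟨x, φ_j⟩|² < ∞}, and define Q : D → H by Q(x) = ∑_{j=0}^∞ λ_j ⟨x, φ_j⟩ φ_j. Suppose S is a linear subspace of H with D ⊆ S and T : S → H is a linear map such that ⟨T x, y⟩ = ⟨x, T y⟩ for all x, y ∈ S and T x = Q x for all x ∈ D. Then S = D (and hence T = Q): the operator Q is a maximal symmetric extension of itself. -/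
/-!
Each `φ j` lies in `D` and is an eigenvector of `T` with eigenvalue `lam j`, so symmetry of `T`
gives `⟪φ j, T x⟫ = lam j * ⟪φ j, x⟫` for every `x ∈ S`. Bessel's inequality for `T x` then says
exactly that `x ∈ D`.
-/

open scoped InnerProductSpace

section

variable {𝕜 E ι : Type*} [RCLike 𝕜] [NormedAddCommGroup E] [InnerProductSpace 𝕜 E]
  {φ : ι → E}

theorem Orthonormal.summable_mul_norm_inner_sq_apply (hφ : Orthonormal 𝕜 φ) (w : ι → ℝ)
    (j : ι) : Summable fun i => w i * ‖⟪φ i, φ j⟫_𝕜‖ ^ 2 := by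
  refine summable_of_ne_finset_zero (s := {j}) fun i hi => ?_
  rw [hφ.inner_eq_zero (by simpa using hi)]
  simp

theorem Orthonormal.tsum_mul_inner_smul_apply (hφ : Orthonormal 𝕜 φ) (c : ι → 𝕜) (j : ι) :
    ∑' i, (c i * ⟪φ i, φ j⟫_𝕜) • φ i = c j • φ j := by
  rw [tsum_eq_single j fun i hij => by simp [hφ.inner_eq_zero hij]]
  simp [hφ.1 j]

theorem Orthonormal.summable_sq_mul_norm_inner_sq (hφ : Orthonormal 𝕜 φ) {c : ι → ℝ}
    {x y : E} (hxy : ∀ j, ⟪φ j, y⟫_𝕜 = (c j : 𝕜) * ⟪φ j, x⟫_𝕜) :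
    Summable fun j => c j ^ 2 * ‖⟪φ j, x⟫_𝕜‖ ^ 2 :=
  (hφ.inner_products_summable y).congr fun j => by
    rw [hxy, norm_mul, mul_pow, RCLike.norm_ofReal, sq_abs]

theorem inner_coe_map_eq_ofReal_mul_of_apply_eq_smul {S : Submodule 𝕜 E} {T : S →ₗ[𝕜] E}
    (hT : ∀ x y : S, ⟪T x, (y : E)⟫_𝕜 = ⟪(x : E), T y⟫_𝕜) {v : S} {μ : ℝ}
    (hv : T v = (μ : 𝕜) • (v : E)) (x : S) :
    ⟪(v : E), T x⟫_𝕜 = μ * ⟪(v : E), x⟫_𝕜 := by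
  rw [← hT, hv, inner_smul_left, RCLike.conj_ofReal]

end

theorem maximal_symmetric_extension_general {H : Type*} [NormedAddCommGroup H]
    [InnerProductSpace ℂ H]
    (φ : ℕ → H) (hortho : Orthonormal ℂ φ)
    (lam : ℕ → ℝ)
    (D : Set H) (hD : D = {x : H | Summable (fun j => lam j ^ 2 * ‖(inner ℂ (φ j) x : ℂ)‖ ^ 2)})
    (S : Submodule ℂ H) (hDS : D ⊆ (S : Set H))
    (T : S →ₗ[ℂ] H)
    (hsym : ∀ x y : S, (inner ℂ (T x) (y : H) : ℂ) = inner ℂ (x : H) (T y))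
    (hTQ : ∀ x : S, (x : H) ∈ D →
      T x = ∑' j, ((lam j : ℂ) * (inner ℂ (φ j) (x : H) : ℂ)) • φ j) :
    (S : Set H) = D := by
  subst hD
  refine (Set.Subset.antisymm · hDS) fun x hxS => ?_
  have hφD (j : ℕ) : φ j ∈ {x : H | Summable fun i => lam i ^ 2 * ‖⟪φ i, x⟫_ℂ‖ ^ 2} :=
    hortho.summable_mul_norm_inner_sq_apply _ j
  have hTφ (j : ℕ) : T ⟨φ j, hDS (hφD j)⟩ = (lam j : ℂ) • φ j :=
    (hTQ ⟨φ j, hDS (hφD j)⟩ (hφD j)).trans (hortho.tsum_mul_inner_smul_apply _ j)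
  have hcoef (j : ℕ) : ⟪φ j, T ⟨x, hxS⟩⟫_ℂ = (lam j : ℂ) * ⟪φ j, x⟫_ℂ :=
    inner_coe_map_eq_ofReal_mul_of_apply_eq_smul hsym (hTφ j) ⟨x, hxS⟩
  exact hortho.summable_sq_mul_norm_inner_sq hcoef

/-- Let `φ` be a Hilbert basis of a complex Hilbert space `H`, `lam j ≥ 0`,
`D = {x | ∑_j (lam j)² |⟨φ j, x⟩|² < ∞}` and `Q x = ∑_j lam j ⟨φ j, x⟩ φ j` on `D`.
If `S` is a linear subspace with `D ⊆ S` and `T : S → H` is linear, symmetric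
(`⟨T x, y⟩ = ⟨x, T y⟩` for `x, y ∈ S`) and agrees with `Q` on `D`, then `S = D`:
`Q` is a maximal symmetric extension of itself. -/
theorem maximal_symmetric_extension {H : Type*} [NormedAddCommGroup H]
    [InnerProductSpace ℂ H] [CompleteSpace H]
    (φ : ℕ → H) (hortho : Orthonormal ℂ φ)
    (hcomplete : (Submodule.span ℂ (Set.range φ)).topologicalClosure = ⊤)
    (lam : ℕ → ℝ) (hlam : ∀ j, 0 ≤ lam j)
    (D : Set H) (hD : D = {x : H | Summable (fun j => lam j ^ 2 * ‖(inner ℂ (φ j) x : ℂ)‖ ^ 2)})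
    (S : Submodule ℂ H) (hDS : D ⊆ (S : Set H))
    (T : S →ₗ[ℂ] H)
    (hsym : ∀ x y : S, (inner ℂ (T x) (y : H) : ℂ) = inner ℂ (x : H) (T y))
    (hTQ : ∀ x : S, (x : H) ∈ D →
      T x = ∑' j, ((lam j : ℂ) * (inner ℂ (φ j) (x : H) : ℂ)) • φ j) :
    (S : Set H) = D :=
  maximal_symmetric_extension_general φ hortho lam D hD S hDS T hsym hTQ
end
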